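/- For every dotted composition α = (α_1,…,α_ℓ) and all natural numbers L, M, N, the following identity holds in A_{L+M+N}: M_α(B₁ ∪ B₂ ∪ B₃) = Σ_{0 ≤ i ≤ k ≤ ℓ} M_{(α_1,…,α_i)}(B₁) · M_{(α_{i+1},…,α_k)}(B₂) · M_{(α_{k+1},…,α_ℓ)}(B₃), where B₁, B₂, B₃ are respectively the sets of the first L, the middle M, and the last N indices of Fin (L+M+N), and M_∅(B) = 1. (This is the two-fold splitting expressing the coassociativity of the deconcatenation coproduct on monomial quasisymmetric functions in superspace.) -/

import Mathlib

open TensorProduct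

set_option synthInstance.maxHeartbeats 1000000
set_option maxHeartbeats 1000000

noncomputable section

/-- The ring of polynomials in superspace in `N` variables. -/
abbrev SuperAlg (N : ℕ) : Type :=
  MvPolynomial (Fin N) ℚ ⊗[ℚ] ExteriorAlgebra ℚ (Fin N → ℚ)

/-- The (bosonic) variable `x_i`. -/
def sx {N : ℕ} (i : Fin N) : SuperAlg N := MvPolynomial.X i ⊗ₜ[ℚ] 1

/-- The (fermionic) variable `θ_i`. -/
def sθ {N : ℕ} (i : Fin N) : SuperAlg N :=
  1 ⊗ₜ[ℚ] ExteriorAlgebra.ι ℚ (Pi.single i 1)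

/-- A dotted composition is a list of parts `(a, η)` where `η = true` marks a dotted part,
and undotted parts must be positive. -/
def IsDottedComp (α : List (ℕ × Bool)) : Prop :=
  ∀ p ∈ α, p.2 = false → 1 ≤ p.1

/-- The monomial quasisymmetric function in superspace `M_α(B)` on the alphabet `B`:
the sum over `i_1 < ⋯ < i_ℓ` in `B` of `θ_{i_1}^{η_1} x_{i_1}^{a_1} ⋯ θ_{i_ℓ}^{η_ℓ} x_{i_ℓ}^{a_ℓ}`
(each strictly increasing tuple being encoded as a subset of `B` of size `ℓ`,
listed in increasing order). -/
def Mqs {N : ℕ} (α : List (ℕ × Bool)) (B : Finset (Fin N)) : SuperAlg N :=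
  ∑ S ∈ B.powersetCard α.length,
    (List.zipWith (fun i p => (if p.2 then sθ i else 1) * sx i ^ p.1)
      (S.sort (· ≤ ·)) α).prod

/-!
**Statement 6.** Three-alphabet splitting (coassociativity of the deconcatenation
coproduct) for the monomial quasisymmetric functions in superspace: with `B₁`, `B₂`, `B₃`
respectively the first `L`, middle `M` and last `N` indices of `Fin (L+M+N)`,
`M_α(B₁ ∪ B₂ ∪ B₃) = Σ_{0 ≤ i ≤ k ≤ ℓ} M_{(α_1,…,α_i)}(B₁) · M_{(α_{i+1},…,α_k)}(B₂) ·
M_{(α_{k+1},…,α_ℓ)}(B₃)`.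
-/

/-- two-alphabet splitting -/
lemma sort_union_of_lt {n : ℕ} {S₁ S₂ : Finset (Fin n)}
    (h : ∀ a ∈ S₁, ∀ b ∈ S₂, a < b) :
    (S₁ ∪ S₂).sort (· ≤ ·) = S₁.sort (· ≤ ·) ++ S₂.sort (· ≤ ·) := by
  have hd : Disjoint S₁ S₂ :=
    Finset.disjoint_left.2 fun a h1 h2 => absurd (h a h1 a h2) (lt_irrefl a)
  refine (fun hp hs => List.Perm.eq_of_pairwise' (Finset.pairwise_sort _ _) hs hp) ?_ ?_
  · have hv : (S₁ ∪ S₂).val = S₁.val + S₂.val := by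
      rw [← Finset.disjUnion_eq_union _ _ hd]; rfl
    apply Multiset.coe_eq_coe.1
    rw [show ((S₁.sort (· ≤ ·) ++ S₂.sort (· ≤ ·) : List (Fin n)) : Multiset (Fin n))
        = (S₁.sort (· ≤ ·) : Multiset (Fin n)) + (S₂.sort (· ≤ ·) : Multiset (Fin n))
      from rfl, Finset.sort_eq, Finset.sort_eq, Finset.sort_eq, hv]
  · refine (List.pairwise_append).2 ⟨Finset.pairwise_sort _ _, Finset.pairwise_sort _ _, ?_⟩
    intro a ha b hb
    exact le_of_lt (h a ((Finset.mem_sort _).1 ha) b ((Finset.mem_sort _).1 hb))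

lemma Mqs_union {n : ℕ} (α : List (ℕ × Bool)) {B C : Finset (Fin n)}
    (h : ∀ b ∈ B, ∀ c ∈ C, b < c) :
    Mqs α (B ∪ C) = ∑ i ∈ Finset.range (α.length + 1),
      Mqs (α.take i) B * Mqs (α.drop i) C := by
  classical
  have hd : Disjoint B C :=
    Finset.disjoint_left.2 fun a h1 h2 => absurd (h a h1 a h2) (lt_irrefl a)
  set f : Fin n → (ℕ × Bool) → SuperAlg n :=
    fun i p => (if p.2 then sθ i else 1) * sx i ^ p.1 with hf
  set F : (Σ _ : ℕ, Finset (Fin n) × Finset (Fin n)) → SuperAlg n :=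
    fun x => (List.zipWith f (x.2.1.sort (· ≤ ·)) (α.take x.1)).prod *
      (List.zipWith f (x.2.2.sort (· ≤ ·)) (α.drop x.1)).prod with hF
  have RHS_eq : ∑ i ∈ Finset.range (α.length + 1), Mqs (α.take i) B * Mqs (α.drop i) C
      = ∑ x ∈ (Finset.range (α.length + 1)).sigma
          (fun i => B.powersetCard i ×ˢ C.powersetCard (α.length - i)), F x := by
    rw [Finset.sum_sigma]
    refine Finset.sum_congr rfl fun i hi => ?_
    have hi' : i ≤ α.length := Nat.lt_succ_iff.1 (Finset.mem_range.1 hi)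
    have h1 : (α.take i).length = i := by simp [List.length_take]; omega
    have h2 : (α.drop i).length = α.length - i := by simp
    rw [Mqs, Mqs, h1, h2, Finset.sum_mul_sum]
    rw [Finset.sum_product]
  rw [RHS_eq, Mqs]
  refine Finset.sum_nbij' (i := fun S => ⟨(S ∩ B).card, (S ∩ B, S ∩ C)⟩)
    (j := fun x => x.2.1 ∪ x.2.2) ?_ ?_ ?_ ?_ ?_
  · intro S hS
    obtain ⟨hSsub, hScard⟩ := Finset.mem_powersetCard.1 hS
    have hsplit : (S ∩ B) ∪ (S ∩ C) = S := by
      rw [← Finset.inter_union_distrib_left, Finset.inter_eq_left.2 hSsub]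
    have hdisj : Disjoint (S ∩ B) (S ∩ C) :=
      hd.mono Finset.inter_subset_right Finset.inter_subset_right
    have hcard : (S ∩ B).card + (S ∩ C).card = α.length := by
      rw [← Finset.card_union_of_disjoint hdisj, hsplit, hScard]
    simp only [Finset.mem_sigma, Finset.mem_range, Finset.mem_product,
      Finset.mem_powersetCard]
    refine ⟨by omega, ⟨Finset.inter_subset_right, trivial⟩,
      ⟨Finset.inter_subset_right, by omega⟩⟩
  · rintro ⟨i, S₁, S₂⟩ hx
    simp only [Finset.mem_sigma, Finset.mem_range, Finset.mem_product,
      Finset.mem_powersetCard] at hx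
    obtain ⟨hi, ⟨h1s, h1c⟩, ⟨h2s, h2c⟩⟩ := hx
    refine Finset.mem_powersetCard.2 ⟨Finset.union_subset_union h1s h2s, ?_⟩
    rw [Finset.card_union_of_disjoint (hd.mono h1s h2s), h1c, h2c]
    omega
  · intro S hS
    obtain ⟨hSsub, hScard⟩ := Finset.mem_powersetCard.1 hS
    dsimp only
    rw [← Finset.inter_union_distrib_left, Finset.inter_eq_left.2 hSsub]
  · rintro ⟨i, S₁, S₂⟩ hx
    simp only [Finset.mem_sigma, Finset.mem_range, Finset.mem_product,
      Finset.mem_powersetCard] at hx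
    obtain ⟨hi, ⟨h1s, h2s⟩, ⟨h3s, h4s⟩⟩ := hx
    have hd1 : Disjoint S₂ B := Finset.disjoint_left.2 fun a ha hb =>
      absurd (h a hb a (h3s ha)) (lt_irrefl a)
    have hd2 : Disjoint S₁ C := Finset.disjoint_left.2 fun a ha hb =>
      absurd (h a (h1s ha) a hb) (lt_irrefl a)
    have e1 : (S₁ ∪ S₂) ∩ B = S₁ := by
      rw [Finset.union_inter_distrib_right, Finset.inter_eq_left.2 h1s,
        Finset.disjoint_iff_inter_eq_empty.1 hd1, Finset.union_empty]
    have e2 : (S₁ ∪ S₂) ∩ C = S₂ := by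
      rw [Finset.union_inter_distrib_right, Finset.inter_eq_left.2 h3s,
        Finset.disjoint_iff_inter_eq_empty.1 hd2, Finset.empty_union]
    dsimp only
    rw [e1, e2, h2s]
  · intro S hS
    obtain ⟨hSsub, hScard⟩ := Finset.mem_powersetCard.1 hS
    have hsplit : (S ∩ B) ∪ (S ∩ C) = S := by
      rw [← Finset.inter_union_distrib_left, Finset.inter_eq_left.2 hSsub]
    have hlt : ∀ a ∈ S ∩ B, ∀ b ∈ S ∩ C, a < b := fun a ha b hb =>
      h a (Finset.mem_inter.1 ha).2 b (Finset.mem_inter.1 hb).2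
    have hsort : S.sort (· ≤ ·) = (S ∩ B).sort (· ≤ ·) ++ (S ∩ C).sort (· ≤ ·) := by
      have := sort_union_of_lt hlt
      rw [hsplit] at this
      exact this
    have hc : (S ∩ B).card ≤ α.length := by
      have := Finset.card_le_card (Finset.inter_subset_left : S ∩ B ⊆ S)
      omega
    have hlen : ((S ∩ B).sort (· ≤ ·)).length = (α.take (S ∩ B).card).length := by
      simp [List.length_take]; omega
    simp only [hF]
    conv_lhs => rw [hsort, ← List.take_append_drop ((S ∩ B).card) α]
    rw [List.zipWith_append hlen, List.prod_append]

theorem Mqs_superspace_coassoc (α : List (ℕ × Bool)) (hα : IsDottedComp α) (L M N : ℕ) :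
    Mqs α ((Finset.univ.image (fun i : Fin L => (Fin.castAdd N (Fin.castAdd M i))))
            ∪ (Finset.univ.image (fun i : Fin M => (Fin.castAdd N (Fin.natAdd L i))))
            ∪ (Finset.univ.image (Fin.natAdd (L + M))))
      = ∑ k ∈ Finset.range (α.length + 1), ∑ i ∈ Finset.range (k + 1),
          Mqs (α.take i)
              (Finset.univ.image (fun i : Fin L => (Fin.castAdd N (Fin.castAdd M i)))) *
            Mqs ((α.take k).drop i)
                (Finset.univ.image (fun i : Fin M => (Fin.castAdd N (Fin.natAdd L i)))) *
              Mqs (α.drop k) (Finset.univ.image (Fin.natAdd (L + M))) := by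
  classical
  set B₁ := Finset.univ.image (fun i : Fin L => (Fin.castAdd N (Fin.castAdd M i))) with hB₁
  set B₂ := Finset.univ.image (fun i : Fin M => (Fin.castAdd N (Fin.natAdd L i))) with hB₂
  set B₃ := Finset.univ.image (Fin.natAdd (L + M) : Fin N → Fin (L + M + N)) with hB₃
  have h12 : ∀ b ∈ B₁, ∀ c ∈ B₂, b < c := by
    intro b hb c hc
    simp only [hB₁, hB₂, Finset.mem_image, Finset.mem_univ, true_and] at hb hc
    obtain ⟨i, rfl⟩ := hb
    obtain ⟨j, rfl⟩ := hc
    simp only [Fin.lt_def, Fin.coe_castAdd, Fin.coe_natAdd]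
    omega
  have h123 : ∀ b ∈ B₁ ∪ B₂, ∀ c ∈ B₃, b < c := by
    intro b hb c hc
    simp only [hB₁, hB₂, hB₃, Finset.mem_union, Finset.mem_image, Finset.mem_univ,
      true_and] at hb hc
    obtain ⟨j, rfl⟩ := hc
    rcases hb with ⟨i, rfl⟩ | ⟨i, rfl⟩ <;>
      · simp only [Fin.lt_def, Fin.coe_castAdd, Fin.coe_natAdd]
        omega
  rw [Mqs_union α h123]
  refine Finset.sum_congr rfl fun k hk => ?_
  have hk' : k ≤ α.length := Nat.lt_succ_iff.1 (Finset.mem_range.1 hk)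
  rw [Mqs_union (α.take k) h12, Finset.sum_mul]
  have hlen : (α.take k).length = k := by simp [List.length_take]; omega
  rw [hlen]
  refine Finset.sum_congr rfl fun i hi => ?_
  have hi' : i ≤ k := Nat.lt_succ_iff.1 (Finset.mem_range.1 hi)
  rw [List.take_take, min_eq_left hi']


end
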